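/- arXiv:2604.20683 — 7 statements merged into one kernel-verified Lean document; each statement's English description precedes it below -/
import Mathlib

section
/- Let m, r, α be positive integers, let v_1, …, v_r ∈ ℝ^m, and let P_1, …, P_α be a partition of the index set {1, …, r}. Let K_1, …, K_r : {x ∈ ℝ^m : every coordinate of x is positive} → ℝ be arbitrary functions. Define E = {x with all coordinates positive : Σ_{j=1}^r K_j(x)·v_j = 0} and, for each i, E_i = {x with all coordinates positive : Σ_{j ∈ P_i} K_j(x)·v_j = 0}. Then E_1 ∩ … ∩ E_α ⊆ E; moreover, if the decomposition is independent, i.e. dim span{v_1, …, v_r} = Σ_{i=1}^α dim span{v_j : j ∈ P_i}, then E_1 ∩ … ∩ E_α = E. -/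
open Module Submodule in
lemma aux_finrank_le {V : Type*} [AddCommGroup V] [Module ℝ V]
    [FiniteDimensional ℝ V] {ι : Type*} [DecidableEq ι] (s : Finset ι)
    (W : ι → Submodule ℝ V) :
    finrank ℝ (⨆ i ∈ s, W i : Submodule ℝ V) ≤ ∑ i ∈ s, finrank ℝ (W i) := by
  classical
  induction s using Finset.induction_on with
  | empty => simp
  | @insert a s ha ih =>
    rw [Finset.iSup_insert, Finset.sum_insert ha]
    have h := Submodule.finrank_sup_add_finrank_inf_eq (W a) (⨆ i ∈ s, W i)
    omega

open Module Submodule in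
lemma aux_indep {V : Type*} [AddCommGroup V] [Module ℝ V]
    [FiniteDimensional ℝ V] {ι : Type*} [DecidableEq ι] (s : Finset ι)
    (W : ι → Submodule ℝ V)
    (h : finrank ℝ (⨆ i ∈ s, W i : Submodule ℝ V) = ∑ i ∈ s, finrank ℝ (W i))
    (w : ι → V) (hw : ∀ i ∈ s, w i ∈ W i) (hsum : ∑ i ∈ s, w i = 0) :
    ∀ i ∈ s, w i = 0 := by
  classical
  induction s using Finset.induction_on with
  | empty => simp
  | @insert a s ha ih =>
    rw [Finset.iSup_insert, Finset.sum_insert ha] at h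
    rw [Finset.sum_insert ha] at hsum
    have hle := aux_finrank_le s W
    have heq := Submodule.finrank_sup_add_finrank_inf_eq (W a) (⨆ i ∈ s, W i)
    have hB : finrank ℝ (⨆ i ∈ s, W i : Submodule ℝ V) = ∑ i ∈ s, finrank ℝ (W i) := by
      omega
    have hinf : finrank ℝ (W a ⊓ ⨆ i ∈ s, W i : Submodule ℝ V) = 0 := by omega
    have hbot : (W a ⊓ ⨆ i ∈ s, W i : Submodule ℝ V) = ⊥ :=
      Submodule.finrank_eq_zero.mp hinf
    have hmemB : ∑ i ∈ s, w i ∈ (⨆ i ∈ s, W i : Submodule ℝ V) :=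
      Submodule.sum_mem _ fun i hi =>
        Submodule.mem_iSup_of_mem i (Submodule.mem_iSup_of_mem hi
          (hw i (Finset.mem_insert_of_mem hi)))
    have hwa : w a = 0 := by
      have : w a ∈ (W a ⊓ ⨆ i ∈ s, W i : Submodule ℝ V) := by
        refine ⟨hw a (Finset.mem_insert_self a s), ?_⟩
        rw [eq_neg_of_add_eq_zero_left hsum]
        exact neg_mem hmemB
      rw [hbot] at this
      simpa using this
    intro i hi
    rcases Finset.mem_insert.mp hi with rfl | hi
    · exact hwa
    · exact ih hB (fun j hj => hw j (Finset.mem_insert_of_mem hj))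
        (by rwa [hwa, zero_add] at hsum) i hi

/-- For a reaction network with reaction vectors `v 1, …, v r` in `ℝ^m`, kinetics
`K`, and a decomposition given by a partition `P` of the reaction indices, the
common positive steady states of the subnetworks are contained in the positive
steady states of the whole network; and if the decomposition is independent
(the rank of the whole network equals the sum of the ranks of the subnetworks),
then the two sets coincide. -/
theorem independent_decomposition_steady_states
    (m r α : ℕ) (hm : 0 < m) (hr : 0 < r) (hα : 0 < α)
    (v : Fin r → (Fin m → ℝ))
    (P : Fin α → Finset (Fin r))
    (hpart : ∀ k : Fin r, ∃! i : Fin α, k ∈ P i)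
    (K : Fin r → (Fin m → ℝ) → ℝ) :
    (⋂ i : Fin α,
        {x : Fin m → ℝ | (∀ s, 0 < x s) ∧ ∑ j ∈ P i, K j x • v j = 0})
      ⊆ {x : Fin m → ℝ | (∀ s, 0 < x s) ∧ ∑ j : Fin r, K j x • v j = 0} ∧
    (Module.finrank ℝ (Submodule.span ℝ (Set.range v)) =
        ∑ i : Fin α,
          Module.finrank ℝ (Submodule.span ℝ (v '' (P i : Set (Fin r)))) →
      (⋂ i : Fin α,
          {x : Fin m → ℝ | (∀ s, 0 < x s) ∧ ∑ j ∈ P i, K j x • v j = 0})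
        = {x : Fin m → ℝ | (∀ s, 0 < x s) ∧ ∑ j : Fin r, K j x • v j = 0}) := by
  classical
  -- choose the fiber function
  choose σ hσ huniq using hpart
  have hPfilter : ∀ i : Fin α, P i = Finset.univ.filter (fun k => σ k = i) := by
    intro i
    ext k
    simp only [Finset.mem_filter, Finset.mem_univ, true_and]
    constructor
    · intro hk; exact (huniq k i hk).symm
    · rintro rfl; exact hσ k
  have hsplit : ∀ (g : Fin r → Fin m → ℝ),
      ∑ i : Fin α, ∑ j ∈ P i, g j = ∑ j : Fin r, g j := by
    intro g
    calc ∑ i : Fin α, ∑ j ∈ P i, g j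
        = ∑ i : Fin α, ∑ j ∈ Finset.univ.filter (fun k => σ k = i), g j := by
          refine Finset.sum_congr rfl fun i _ => ?_
          rw [hPfilter i]
      _ = ∑ j : Fin r, g j := Finset.sum_fiberwise _ _ _
  constructor
  · intro x hx
    have h0 := Set.mem_iInter.mp hx
    refine ⟨(h0 ⟨0, hα⟩).1, ?_⟩
    rw [← hsplit (fun j => K j x • v j)]
    exact Finset.sum_eq_zero fun i _ => (h0 i).2
  · intro hrank
    apply Set.Subset.antisymm
    · intro x hx
      have h0 := Set.mem_iInter.mp hx
      refine ⟨(h0 ⟨0, hα⟩).1, ?_⟩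
      rw [← hsplit (fun j => K j x • v j)]
      exact Finset.sum_eq_zero fun i _ => (h0 i).2
    · rintro x ⟨hpos, hsum⟩
      set W : Fin α → Submodule ℝ (Fin m → ℝ) :=
        fun i => Submodule.span ℝ (v '' (P i : Set (Fin r))) with hW
      have hcover : Set.range v = ⋃ i : Fin α, v '' (P i : Set (Fin r)) := by
        apply Set.Subset.antisymm
        · rintro _ ⟨k, rfl⟩
          exact Set.mem_iUnion.mpr ⟨σ k, ⟨k, hσ k, rfl⟩⟩
        · simp only [Set.iUnion_subset_iff, Set.image_subset_iff]
          intro i k _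
          exact Set.mem_range_self k
      have hspan : Submodule.span ℝ (Set.range v) = ⨆ i ∈ (Finset.univ : Finset (Fin α)), W i := by
        rw [hcover, Submodule.span_iUnion]
        simp [hW]
      set w : Fin α → (Fin m → ℝ) := fun i => ∑ j ∈ P i, K j x • v j with hw
      have hwmem : ∀ i ∈ (Finset.univ : Finset (Fin α)), w i ∈ W i := by
        intro i _
        exact Submodule.sum_mem _ fun j hj =>
          Submodule.smul_mem _ _ (Submodule.subset_span ⟨j, hj, rfl⟩)
      have hwsum : ∑ i ∈ (Finset.univ : Finset (Fin α)), w i = 0 := by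
        rw [hw]; rw [hsplit (fun j => K j x • v j)]; exact hsum
      have hkey : ∀ i ∈ (Finset.univ : Finset (Fin α)), w i = 0 := by
        refine aux_indep _ W ?_ w hwmem hwsum
        rw [← hspan]
        exact hrank
      refine Set.mem_iInter.mpr fun i => ⟨hpos, hkey i (Finset.mem_univ i)⟩
end

section
/- Let v_1, …, v_r ∈ ℝ^m and let P_1, …, P_α be a partition of {1, …, r} such that dim span{v_1, …, v_r} = Σ_{i=1}^α dim span{v_j : j ∈ P_i}. Then for any scalars c_1, …, c_r ∈ ℝ, if Σ_{j=1}^r c_j·v_j = 0 then Σ_{j ∈ P_i} c_j·v_j = 0 for every i ∈ {1, …, α}. -/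
section Aux

variable {V : Type*} [AddCommGroup V] [Module ℝ V] [FiniteDimensional ℝ V]

lemma iSup_fin_succ (n : ℕ) (S : Fin (n + 1) → Submodule ℝ V) :
    (⨆ i, S i) = S 0 ⊔ ⨆ i : Fin n, S i.succ := by
  apply le_antisymm
  · exact iSup_le fun i => Fin.cases le_sup_left
      (fun j => le_sup_of_le_right (le_iSup (fun j : Fin n => S j.succ) j)) i
  · exact sup_le (le_iSup S 0) (iSup_le fun j => le_iSup S j.succ)

lemma finrank_iSup_le_sum :
    ∀ (n : ℕ) (S : Fin n → Submodule ℝ V),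
      Module.finrank ℝ ↥(⨆ i, S i) ≤ ∑ i, Module.finrank ℝ ↥(S i) := by
  intro n
  induction n with
  | zero => intro S; simp
  | succ n ih =>
    intro S
    rw [Fin.sum_univ_succ, iSup_fin_succ]
    have h2 := Submodule.finrank_sup_add_finrank_inf_eq (S 0) (⨆ i : Fin n, S i.succ)
    have h3 := ih (fun i => S i.succ)
    omega

lemma aux_indep_s1 :
    ∀ (n : ℕ) (S : Fin n → Submodule ℝ V),
      Module.finrank ℝ ↥(⨆ i, S i) = ∑ i, Module.finrank ℝ ↥(S i) →
      ∀ w : Fin n → V, (∀ i, w i ∈ S i) → ∑ i, w i = 0 → ∀ i, w i = 0 := by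
  intro n
  induction n with
  | zero => intro S _ w _ _ i; exact absurd i.2 (by omega)
  | succ n ih =>
    intro S hS w hw hsum
    set R : Submodule ℝ V := ⨆ i : Fin n, S i.succ with hR
    have h2 := Submodule.finrank_sup_add_finrank_inf_eq (S 0) R
    have h3 := finrank_iSup_le_sum n (fun i => S i.succ)
    rw [iSup_fin_succ, Fin.sum_univ_succ] at hS
    rw [← hR] at hS h3
    have hRrank : Module.finrank ℝ ↥R = ∑ i : Fin n, Module.finrank ℝ ↥(S i.succ) := by
      omega
    have hinf : Module.finrank ℝ ↥(S 0 ⊓ R) = 0 := by omega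
    have hbot : S 0 ⊓ R = ⊥ := Submodule.finrank_eq_zero.mp hinf
    have hsum' : w 0 + ∑ i : Fin n, w i.succ = 0 := by
      rw [← Fin.sum_univ_succ]; exact hsum
    have hw0R : w 0 ∈ R := by
      have : w 0 = -∑ i : Fin n, w i.succ := eq_neg_of_add_eq_zero_left hsum'
      rw [this]
      exact neg_mem (Submodule.sum_mem _ fun i _ =>
        (le_iSup (fun i : Fin n => S i.succ) i) (hw i.succ))
    have hw0 : w 0 = 0 := by
      have : w 0 ∈ S 0 ⊓ R := ⟨hw 0, hw0R⟩
      rw [hbot] at this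
      exact this
    have hrest : ∀ i : Fin n, w i.succ = 0 := by
      apply ih (fun i => S i.succ) hRrank (fun i => w i.succ) (fun i => hw i.succ)
      rw [hw0, zero_add] at hsum'
      exact hsum'
    intro i
    exact Fin.cases hw0 hrest i

end Aux

/-- Linear-algebra core of independent decompositions: if a partition
`P 1, …, P α` of the index set of vectors `v 1, …, v r` in `ℝ^m` is independent,
i.e. the dimension of the span of all the vectors equals the sum of the
dimensions of the spans of the vectors in each part, then any linear
combination of all the vectors that vanishes has vanishing partial sums over
each part. -/
theorem independent_decomposition_partial_sums_vanish
    (m r α : ℕ)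
    (v : Fin r → (Fin m → ℝ))
    (P : Fin α → Finset (Fin r))
    (hpart : ∀ k : Fin r, ∃! i : Fin α, k ∈ P i)
    (hind : Module.finrank ℝ (Submodule.span ℝ (Set.range v)) =
      ∑ i : Fin α,
        Module.finrank ℝ (Submodule.span ℝ (v '' (P i : Set (Fin r))))) :
    ∀ c : Fin r → ℝ, ∑ j : Fin r, c j • v j = 0 →
      ∀ i : Fin α, ∑ j ∈ P i, c j • v j = 0 := by
  intro c hc i
  set S : Fin α → Submodule ℝ (Fin m → ℝ) :=
    fun i => Submodule.span ℝ (v '' (P i : Set (Fin r))) with hSdef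
  -- the partition function
  have hf : ∀ k : Fin r, ∀ i : Fin α, k ∈ P i ↔ (hpart k).choose = i := by
    intro k i
    constructor
    · intro hk; exact ((hpart k).choose_spec.2 i hk).symm
    · intro h; rw [← h]; exact (hpart k).choose_spec.1
  have hPfilter : ∀ i : Fin α,
      P i = Finset.univ.filter (fun k => (hpart k).choose = i) := by
    intro i
    ext k
    simp [hf k i]
  -- span of range equals iSup
  have hrange : Set.range v = ⋃ i, v '' (P i : Set (Fin r)) := by
    ext x
    constructor
    · rintro ⟨k, rfl⟩
      exact Set.mem_iUnion.mpr ⟨(hpart k).choose, ⟨k, (hpart k).choose_spec.1, rfl⟩⟩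
    · intro hx
      simp only [Set.mem_iUnion, Set.mem_image] at hx
      obtain ⟨j, k, _, rfl⟩ := hx
      exact ⟨k, rfl⟩
  have hspan : Submodule.span ℝ (Set.range v) = ⨆ i, S i := by
    rw [hrange, Submodule.span_iUnion]
  -- partial sums
  set w : Fin α → (Fin m → ℝ) := fun i => ∑ j ∈ P i, c j • v j with hwdef
  have hwmem : ∀ i, w i ∈ S i := by
    intro i
    exact Submodule.sum_mem _ fun j hj =>
      Submodule.smul_mem _ _ (Submodule.subset_span ⟨j, hj, rfl⟩)
  have hwsum : ∑ i, w i = 0 := by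
    rw [hwdef, ← hc]
    calc ∑ i, ∑ j ∈ P i, c j • v j
        = ∑ i, ∑ j ∈ Finset.univ.filter (fun k => (hpart k).choose = i),
            c j • v j := by
          refine Finset.sum_congr rfl fun i _ => ?_
          rw [← hPfilter]
      _ = ∑ j, c j • v j :=
          Finset.sum_fiberwise Finset.univ (fun k => (hpart k).choose)
            (fun j => c j • v j)
  have := aux_indep_s1 α S (by rw [← hspan]; exact hind) w hwmem hwsum i
  exact this
end

section
/- Let V be a finite type and E : V → V → Prop a binary relation (a finite directed graph with edge relation E). Let ∼w be the equivalence closure of E (so its equivalence classes are the linkage classes, i.e. weakly connected components), and let ∼s be the relation a ∼s b iff both (ReflTransGen E) a b and (ReflTransGen E) b a (so its equivalence classes are the strong linkage classes, i.e. strongly connected components). Then the number of equivalence classes of ∼w equals the number of equivalence classes of ∼s if and only if for every a, b ∈ V with E a b one has (ReflTransGen E) b a, i.e. every edge of the graph lies on a directed cycle. -/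
private lemma rtg_to_eqv {V : Type*} {E : V → V → Prop} {a b : V}
    (h : Relation.ReflTransGen E a b) : Relation.EqvGen E a b := by
  induction h with
  | refl => exact Relation.EqvGen.refl a
  | tail _ e ih => exact ih.trans _ _ _ (Relation.EqvGen.rel _ _ e)

/-- For a finite directed graph with edge relation `E`, the number of linkage
classes (equivalence classes of the equivalence closure of `E`, i.e. weakly
connected components) equals the number of strong linkage classes (equivalence
classes of mutual reachability, i.e. strongly connected components) if and only
if every edge lies on a directed cycle, i.e. `E a b` implies that `a` is
reachable from `b`. -/
theorem weakly_reversible_iff_classes_count_eq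
    {V : Type*} [Fintype V] (E : V → V → Prop) :
    Nat.card (Quotient (⟨Relation.EqvGen E, Relation.EqvGen.is_equivalence E⟩ : Setoid V)) =
      Nat.card (Quotient
        (⟨fun a b => Relation.ReflTransGen E a b ∧ Relation.ReflTransGen E b a,
          ⟨fun _ => ⟨Relation.ReflTransGen.refl, Relation.ReflTransGen.refl⟩,
           fun h => ⟨h.2, h.1⟩,
           fun h₁ h₂ => ⟨h₁.1.trans h₂.1, h₂.2.trans h₁.2⟩⟩⟩ : Setoid V)) ↔
    ∀ a b, E a b → Relation.ReflTransGen E b a := by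
  set sW : Setoid V := ⟨Relation.EqvGen E, Relation.EqvGen.is_equivalence E⟩ with hsW
  set sS : Setoid V :=
    ⟨fun a b => Relation.ReflTransGen E a b ∧ Relation.ReflTransGen E b a,
      ⟨fun _ => ⟨Relation.ReflTransGen.refl, Relation.ReflTransGen.refl⟩,
       fun h => ⟨h.2, h.1⟩,
       fun h₁ h₂ => ⟨h₁.1.trans h₂.1, h₂.2.trans h₁.2⟩⟩⟩ with hsS
  have hle : ∀ a b : V, sS.r a b → sW.r a b := fun a b h => rtg_to_eqv h.1
  constructor
  · intro hcard a b hab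
    -- the natural surjection from strong classes to weak classes
    let f : Quotient sS → Quotient sW := Quotient.map' id hle
    have hsurj : Function.Surjective f := by
      intro x
      refine Quotient.inductionOn x (fun v => ⟨Quotient.mk sS v, rfl⟩)
    have hinj : Function.Injective f := by
      exact ((Nat.bijective_iff_surjective_and_card f).2 ⟨hsurj, hcard.symm⟩).injective
    have : sS.r a b := by
      have hw : sW.r a b := Relation.EqvGen.rel _ _ hab
      have : f (Quotient.mk sS a) = f (Quotient.mk sS b) := Quotient.sound' hw
      exact Quotient.exact' (hinj this)
    exact this.2
  · intro h
    have hEq : sW = sS := by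
      apply Setoid.ext
      intro a b
      constructor
      · intro hw
        induction hw with
        | rel x y e => exact ⟨Relation.ReflTransGen.single e, h x y e⟩
        | refl x => exact sS.refl x
        | symm x y _ ih => exact sS.symm' ih
        | trans x y z _ _ ih₁ ih₂ => exact sS.trans' ih₁ ih₂
      · exact hle a b
    rw [hEq]
end

section
/- Let k_1, …, k_14 be positive real numbers and let u > 0 and y > 0 be arbitrary. Define Yp* = k_1·k_3·k_5·(k_10+k_11)·(k_13+k_14) / (k_2·k_9·k_11·(k_4+k_5)·(k_13+k_14) + k_1·k_3·k_12·k_14·(k_10+k_11)), and set x = u·k_8·(k_4+k_5)/(k_3·k_5), xd = u·k_2·k_8·(k_4+k_5)/(k_1·k_3·k_5), xt = u·k_8/k_5, xp = u·(k_7+k_8)/(k_6·y), yp = Yp*, v = k_9·xd·yp/(k_10+k_11), w = k_12·xt·yp/(k_13+k_14). Then (x, xd, xt, xp, y, yp, u, v, w) is a positive steady state of the EnvZ–OmpR mass-action system, i.e. all nine right-hand sides vanish at this point. -/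
/-!
Each complex equation is a binomial relation (`k6 xp y = (k7 + k8) u`, and likewise for
`v` and `w`), and so, given those, are the balances `k1 xd = k2 x`, `k3 x = (k4 + k5) xt`,
`k5 xt = k8 u` along the kinase cycle. Modulo these relations the nine right-hand sides
reduce to the single flux balance `k11 v + k14 w = k8 u`: OmpR is dephosphorylated through
`XD` and `XT` as fast as it is phosphorylated through `X_pY`. The parametrization satisfies
the binomial relations by construction, and `Yp*` is the value of `yp` that makes the flux
balance hold.
-/

section EnvZOmpR

variable {k1 k2 k3 k4 k5 k6 k7 k8 k9 k10 k11 k12 k13 k14 x xd xt xp y yp u v w : ℝ}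

theorem envZOmpR_steady_state_of_balances
    (hxd : k1 * xd = k2 * x) (hxt : k3 * x = (k4 + k5) * xt) (hxp : k5 * xt = k8 * u)
    (hu : k6 * xp * y = (k7 + k8) * u) (hv : k9 * xd * yp = (k10 + k11) * v)
    (hw : k12 * xt * yp = (k13 + k14) * w) (hflux : k11 * v + k14 * w = k8 * u) :
    k1 * xd - (k2 + k3) * x + k4 * xt + k8 * u = 0 ∧
    k2 * x - k1 * xd - k9 * xd * yp + (k10 + k11) * v = 0 ∧
    k3 * x - (k4 + k5) * xt - k12 * xt * yp + (k13 + k14) * w = 0 ∧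
    k5 * xt - k6 * xp * y + k7 * u = 0 ∧
    -(k6 * xp * y) + k7 * u + k11 * v + k14 * w = 0 ∧
    k8 * u - k9 * xd * yp + k10 * v - k12 * xt * yp + k13 * w = 0 ∧
    k6 * xp * y - (k7 + k8) * u = 0 ∧
    k9 * xd * yp - (k10 + k11) * v = 0 ∧
    k12 * xt * yp - (k13 + k14) * w = 0 :=
  ⟨by linarith, by linarith, by linarith, by linarith, by linarith, by linarith,
    by linarith, by linarith, by linarith⟩

theorem envZOmpR_phosphotransfer_balance (hk1 : 0 < k1) (hk2 : 0 < k2) (hk3 : 0 < k3)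
    (hk4 : 0 < k4) (hk5 : 0 < k5) (hk9 : 0 < k9) (hk10 : 0 < k10) (hk11 : 0 < k11)
    (hk12 : 0 < k12) (hk13 : 0 < k13) (hk14 : 0 < k14)
    (hxd : xd = u * k2 * k8 * (k4 + k5) / (k1 * k3 * k5)) (hxt : xt = u * k8 / k5)
    (hyp : yp = k1 * k3 * k5 * (k10 + k11) * (k13 + k14) /
      (k2 * k9 * k11 * (k4 + k5) * (k13 + k14) + k1 * k3 * k12 * k14 * (k10 + k11))) :
    k11 * (k9 * xd * yp / (k10 + k11)) + k14 * (k12 * xt * yp / (k13 + k14)) = k8 * u := by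
  have hden : 0 < k2 * k9 * k11 * (k4 + k5) * (k13 + k14) +
      k1 * k3 * k12 * k14 * (k10 + k11) := by positivity
  subst hxd hxt hyp
  field_simp

end EnvZOmpR

/-- For any positive rate constants `k₁, …, k₁₄` and any positive free
parameters `u` (steady-state value of the complex `X_pY`) and `y` (of `OmpR Y`),
the displayed parametrized point is a positive steady state of the EnvZ–OmpR
mass-action system: all nine coordinates are positive and all nine right-hand
sides vanish. -/
theorem envz_ompr_parametrization_is_steady_state
    (k1 k2 k3 k4 k5 k6 k7 k8 k9 k10 k11 k12 k13 k14 : ℝ)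
    (hk1 : 0 < k1) (hk2 : 0 < k2) (hk3 : 0 < k3) (hk4 : 0 < k4)
    (hk5 : 0 < k5) (hk6 : 0 < k6) (hk7 : 0 < k7) (hk8 : 0 < k8)
    (hk9 : 0 < k9) (hk10 : 0 < k10) (hk11 : 0 < k11) (hk12 : 0 < k12)
    (hk13 : 0 < k13) (hk14 : 0 < k14)
    (u y : ℝ) (hu : 0 < u) (hy : 0 < y)
    (x xd xt xp yp v w : ℝ)
    (hyp : yp = k1 * k3 * k5 * (k10 + k11) * (k13 + k14) /
      (k2 * k9 * k11 * (k4 + k5) * (k13 + k14) +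
        k1 * k3 * k12 * k14 * (k10 + k11)))
    (hx : x = u * k8 * (k4 + k5) / (k3 * k5))
    (hxd : xd = u * k2 * k8 * (k4 + k5) / (k1 * k3 * k5))
    (hxt : xt = u * k8 / k5)
    (hxp : xp = u * (k7 + k8) / (k6 * y))
    (hv : v = k9 * xd * yp / (k10 + k11))
    (hw : w = k12 * xt * yp / (k13 + k14)) :
    (0 < x ∧ 0 < xd ∧ 0 < xt ∧ 0 < xp ∧ 0 < y ∧ 0 < yp ∧ 0 < u ∧ 0 < v ∧ 0 < w) ∧
    k1 * xd - (k2 + k3) * x + k4 * xt + k8 * u = 0 ∧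
    k2 * x - k1 * xd - k9 * xd * yp + (k10 + k11) * v = 0 ∧
    k3 * x - (k4 + k5) * xt - k12 * xt * yp + (k13 + k14) * w = 0 ∧
    k5 * xt - k6 * xp * y + k7 * u = 0 ∧
    -(k6 * xp * y) + k7 * u + k11 * v + k14 * w = 0 ∧
    k8 * u - k9 * xd * yp + k10 * v - k12 * xt * yp + k13 * w = 0 ∧
    k6 * xp * y - (k7 + k8) * u = 0 ∧
    k9 * xd * yp - (k10 + k11) * v = 0 ∧
    k12 * xt * yp - (k13 + k14) * w = 0 := by
  have hxd_pos : 0 < xd := by rw [hxd]; positivity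
  have hxt_pos : 0 < xt := by rw [hxt]; positivity
  have hyp_pos : 0 < yp := by rw [hyp]; positivity
  have hflux : k11 * v + k14 * w = k8 * u := by
    rw [hv, hw]
    exact envZOmpR_phosphotransfer_balance hk1 hk2 hk3 hk4 hk5 hk9 hk10 hk11 hk12 hk13 hk14
      hxd hxt hyp
  refine ⟨⟨?_, hxd_pos, hxt_pos, ?_, hy, hyp_pos, hu, ?_, ?_⟩,
    envZOmpR_steady_state_of_balances ?_ ?_ ?_ ?_ ?_ ?_ hflux⟩
  · rw [hx]; positivity
  · rw [hxp]; positivity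
  · rw [hv]; positivity
  · rw [hw]; positivity
  · rw [hx, hxd]; field_simp
  · rw [hx, hxt]; field_simp
  · rw [hxt]; field_simp
  · rw [hxp]; field_simp
  · rw [hv]; field_simp
  · rw [hw]; field_simp
end

section
/- Let k_1, …, k_14 be positive real numbers and let (x, xd, xt, xp, y, yp, u, v, w) be any positive steady state of the EnvZ–OmpR mass-action system. Then necessarily xt = u·k_8/k_5, x = u·k_8·(k_4+k_5)/(k_3·k_5), xd = u·k_2·k_8·(k_4+k_5)/(k_1·k_3·k_5), xp = u·(k_7+k_8)/(k_6·y), v = k_9·xd·yp/(k_10+k_11), w = k_12·xt·yp/(k_13+k_14), and yp = k_1·k_3·k_5·(k_10+k_11)·(k_13+k_14) / (k_2·k_9·k_11·(k_4+k_5)·(k_13+k_14) + k_1·k_3·k_12·k_14·(k_10+k_11)). In particular, every positive steady state is determined by the two free parameters u and y. -/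
/-- Every positive steady state of the EnvZ–OmpR mass-action system satisfies
the displayed closed-form expressions: all concentrations are determined by the
two free parameters `u` (the complex `X_pY`) and `y` (`OmpR Y`), and `yp` is a
fixed function of the rate constants alone. -/
theorem envz_ompr_steady_state_parametrized
    (k1 k2 k3 k4 k5 k6 k7 k8 k9 k10 k11 k12 k13 k14 : ℝ)
    (hk1 : 0 < k1) (hk2 : 0 < k2) (hk3 : 0 < k3) (hk4 : 0 < k4)
    (hk5 : 0 < k5) (hk6 : 0 < k6) (hk7 : 0 < k7) (hk8 : 0 < k8)
    (hk9 : 0 < k9) (hk10 : 0 < k10) (hk11 : 0 < k11) (hk12 : 0 < k12)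
    (hk13 : 0 < k13) (hk14 : 0 < k14)
    (x xd xt xp y yp u v w : ℝ)
    (hx : 0 < x) (hxd : 0 < xd) (hxt : 0 < xt) (hxp : 0 < xp) (hy : 0 < y)
    (hyp : 0 < yp) (hu : 0 < u) (hv : 0 < v) (hw : 0 < w)
    (e1 : k1 * xd - (k2 + k3) * x + k4 * xt + k8 * u = 0)
    (e2 : k2 * x - k1 * xd - k9 * xd * yp + (k10 + k11) * v = 0)
    (e3 : k3 * x - (k4 + k5) * xt - k12 * xt * yp + (k13 + k14) * w = 0)
    (e4 : k5 * xt - k6 * xp * y + k7 * u = 0)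
    (e5 : -(k6 * xp * y) + k7 * u + k11 * v + k14 * w = 0)
    (e6 : k8 * u - k9 * xd * yp + k10 * v - k12 * xt * yp + k13 * w = 0)
    (e7 : k6 * xp * y - (k7 + k8) * u = 0)
    (e8 : k9 * xd * yp - (k10 + k11) * v = 0)
    (e9 : k12 * xt * yp - (k13 + k14) * w = 0) :
    xt = u * k8 / k5 ∧
    x = u * k8 * (k4 + k5) / (k3 * k5) ∧
    xd = u * k2 * k8 * (k4 + k5) / (k1 * k3 * k5) ∧
    xp = u * (k7 + k8) / (k6 * y) ∧
    v = k9 * xd * yp / (k10 + k11) ∧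
    w = k12 * xt * yp / (k13 + k14) ∧
    yp = k1 * k3 * k5 * (k10 + k11) * (k13 + k14) /
      (k2 * k9 * k11 * (k4 + k5) * (k13 + k14) +
        k1 * k3 * k12 * k14 * (k10 + k11)) := by
  have h1011 : (0:ℝ) < k10 + k11 := by linarith
  have h1314 : (0:ℝ) < k13 + k14 := by linarith
  have hxt1 : k5 * xt = k8 * u := by linarith [e4, e7]
  have Hxt : xt = u * k8 / k5 := by
    rw [eq_div_iff hk5.ne']; linarith
  have Hv : v = k9 * xd * yp / (k10 + k11) := by
    rw [eq_div_iff h1011.ne']; linarith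
  have Hw : w = k12 * xt * yp / (k13 + k14) := by
    rw [eq_div_iff h1314.ne']; linarith
  have hx1 : k3 * x = (k4 + k5) * xt := by linarith [e3, e9]
  have Hx : x = u * k8 * (k4 + k5) / (k3 * k5) := by
    rw [eq_div_iff (by positivity : (k3 * k5 : ℝ) ≠ 0)]
    linear_combination k5 * hx1 + (k4 + k5) * hxt1
  have hxd1 : k1 * xd = k2 * x := by linarith [e2, e8]
  have hA : k1 * k3 * k5 * xd = k2 * (k4 + k5) * (k8 * u) := by
    linear_combination k3 * k5 * hxd1 + k2 * k5 * hx1 + k2 * (k4 + k5) * hxt1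
  have Hxd : xd = u * k2 * k8 * (k4 + k5) / (k1 * k3 * k5) := by
    rw [eq_div_iff (by positivity : (k1 * k3 * k5 : ℝ) ≠ 0)]
    linear_combination hA
  have Hxp : xp = u * (k7 + k8) / (k6 * y) := by
    rw [eq_div_iff (by positivity : (k6 * y : ℝ) ≠ 0)]
    linear_combination e7
  have h5 : k8 * u = k11 * v + k14 * w := by linarith [e5, e7]
  have key : (k10 + k11) * (k13 + k14) * (k8 * u)
      = k9 * xd * yp * k11 * (k13 + k14) + k12 * xt * yp * k14 * (k10 + k11) := by
    linear_combination (k10 + k11) * (k13 + k14) * h5 - k11 * (k13 + k14) * e8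
      - k14 * (k10 + k11) * e9
  have key2 : yp * (k2 * k9 * k11 * (k4 + k5) * (k13 + k14)
        + k1 * k3 * k12 * k14 * (k10 + k11)) * (k8 * u)
      = k1 * k3 * k5 * (k10 + k11) * (k13 + k14) * (k8 * u) := by
    linear_combination (-(k1 * k3 * k5)) * key
      + (-(k9 * k11 * (k13 + k14) * yp)) * hA
      + (-(k12 * k14 * (k10 + k11) * k1 * k3 * yp)) * hxt1
  have hku : (k8 * u : ℝ) ≠ 0 := by positivity
  have key3 := mul_right_cancel₀ hku key2
  have hden : (0:ℝ) < k2 * k9 * k11 * (k4 + k5) * (k13 + k14)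
      + k1 * k3 * k12 * k14 * (k10 + k11) := by positivity
  have Hyp : yp = k1 * k3 * k5 * (k10 + k11) * (k13 + k14) /
      (k2 * k9 * k11 * (k4 + k5) * (k13 + k14) +
        k1 * k3 * k12 * k14 * (k10 + k11)) := by
    rw [eq_div_iff hden.ne']
    linear_combination key3
  exact ⟨Hxt, Hx, Hxd, Hxp, Hv, Hw, Hyp⟩
end

section
/- Let k_1, …, k_14 be positive real numbers. At every positive steady state (x, xd, xt, xp, y, yp, u, v, w) of the EnvZ–OmpR mass-action system, the concentration of Y_p takes the same value yp = k_1·k_3·k_5·(k_10+k_11)·(k_13+k_14) / (k_2·k_9·k_11·(k_4+k_5)·(k_13+k_14) + k_1·k_3·k_12·k_14·(k_10+k_11)), an expression depending only on the rate constants; i.e. the system exhibits absolute concentration robustness in Y_p. -/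
/-- Absolute concentration robustness of `Y_p` in the EnvZ–OmpR mass-action
system: at every positive steady state, the concentration `yp` of `Y_p` equals
a fixed expression in the rate constants alone. -/
theorem envz_ompr_acr_in_Yp
    (k1 k2 k3 k4 k5 k6 k7 k8 k9 k10 k11 k12 k13 k14 : ℝ)
    (hk1 : 0 < k1) (hk2 : 0 < k2) (hk3 : 0 < k3) (hk4 : 0 < k4)
    (hk5 : 0 < k5) (hk6 : 0 < k6) (hk7 : 0 < k7) (hk8 : 0 < k8)
    (hk9 : 0 < k9) (hk10 : 0 < k10) (hk11 : 0 < k11) (hk12 : 0 < k12)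
    (hk13 : 0 < k13) (hk14 : 0 < k14)
    (x xd xt xp y yp u v w : ℝ)
    (hx : 0 < x) (hxd : 0 < xd) (hxt : 0 < xt) (hxp : 0 < xp) (hy : 0 < y)
    (hyp : 0 < yp) (hu : 0 < u) (hv : 0 < v) (hw : 0 < w)
    (e1 : k1 * xd - (k2 + k3) * x + k4 * xt + k8 * u = 0)
    (e2 : k2 * x - k1 * xd - k9 * xd * yp + (k10 + k11) * v = 0)
    (e3 : k3 * x - (k4 + k5) * xt - k12 * xt * yp + (k13 + k14) * w = 0)
    (e4 : k5 * xt - k6 * xp * y + k7 * u = 0)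
    (e5 : -(k6 * xp * y) + k7 * u + k11 * v + k14 * w = 0)
    (e6 : k8 * u - k9 * xd * yp + k10 * v - k12 * xt * yp + k13 * w = 0)
    (e7 : k6 * xp * y - (k7 + k8) * u = 0)
    (e8 : k9 * xd * yp - (k10 + k11) * v = 0)
    (e9 : k12 * xt * yp - (k13 + k14) * w = 0) :
    yp = k1 * k3 * k5 * (k10 + k11) * (k13 + k14) /
      (k2 * k9 * k11 * (k4 + k5) * (k13 + k14) +
        k1 * k3 * k12 * k14 * (k10 + k11)) := by
  have hD : 0 < k2 * k9 * k11 * (k4 + k5) * (k13 + k14) +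
      k1 * k3 * k12 * k14 * (k10 + k11) := by positivity
  rw [eq_div_iff hD.ne']
  have key : yp * (k2 * k9 * k11 * (k4 + k5) * (k13 + k14) +
      k1 * k3 * k12 * k14 * (k10 + k11)) * x
      = k1 * k3 * k5 * (k10 + k11) * (k13 + k14) * x := by
    linear_combination (-(k1 * (k4 + k5) * (k10 + k11) * (k13 + k14))) *
        (e4 + e7 + e6 + e8 + e9)
      + k1 * (k4 + k5) * k11 * (k13 + k14) * e8
      + k1 * (k4 + k5) * k14 * (k10 + k11) * e9
      + (k9 * k11 * (k13 + k14) * (k4 + k5) * yp) * (e2 + e8)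
      + (-(k1 * k5 * (k10 + k11) * (k13 + k14))
          + k1 * k12 * k14 * (k10 + k11) * yp) * (e3 + e9)
  exact mul_right_cancel₀ hx.ne' key
end

section
/- Let α_1, …, α_7 be positive real numbers, T_1 > 0, T_2 ∈ ℝ, γ_1 = 1 + α_1 + α_2 + α_3 + α_4 + α_5, γ_2 = α_1 + α_2 + α_3, and let P(x) = (γ_1·α_6·γ_2 − γ_1²·α_6)·x³ + (2·T_1·γ_1·α_6 − T_1·α_6·γ_2 + α_6² − γ_1·α_6·α_7 + γ_1·α_6·T_2)·x² + (T_1·α_6·α_7 − T_1²·α_6 − T_1·α_6·T_2)·x. Then a pair of positive reals (x, y) satisfies the two conservation equations γ_1·x + α_6·x/y = T_1 and −γ_2·x − α_6·x/y + y + α_7 = T_2 if and only if T_1 − γ_1·x > 0, y = α_6·x/(T_1 − γ_1·x), and P(x) = 0. Consequently, the conservation system has at most two solutions with x > 0 and y > 0. -/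
/-!
Eliminating the conservation laws: with `d = T₁ - γ₁x`, the first equation says `α₆x/y = d` and
then the second says `y = T₂ + γ₂x + d - α₇`. For `x > 0` these two conditions on `y` are
compatible exactly when `d > 0` and `α₆x = (T₂ + γ₂x + d - α₇) d`, which after multiplying by `α₆x`
is `P(x) = 0`. Since `P` is a cubic with root `0` (its leading coefficient `-γ₁α₆(γ₁ - γ₂)` is
nonzero), it has at most two nonzero roots, and `x` determines `y`.
-/

open Polynomial

lemma div_eq_and_eq_iff_of_pos {k y d e : ℝ} (hk : 0 < k) (hy : 0 < y) :
    (k / y = d ∧ y = e) ↔ (0 < d ∧ y = k / d ∧ k = e * d) := by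
  constructor
  · rintro ⟨rfl, rfl⟩
    exact ⟨by positivity, by field_simp, by field_simp⟩
  · rintro ⟨hd, rfl, rfl⟩
    have he : 0 < e := by rwa [mul_div_cancel_right₀ _ hd.ne'] at hy
    exact ⟨by field_simp, by field_simp⟩

lemma Set.finite_and_ncard_le_of_subset_image {α β : Type*} {f : α → β} {s : Set α}
    {t : Set β} {n : ℕ} (hs : s.Finite) (hn : s.ncard ≤ n) (h : t ⊆ f '' s) :
    t.Finite ∧ t.ncard ≤ n :=
  ⟨(hs.image f).subset h,
    (Set.ncard_le_ncard h (hs.image f)).trans ((Set.ncard_image_le hs).trans hn)⟩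

lemma cubic_nonzero_roots_finite_and_ncard_le_two {P : ℝ → ℝ} {a b c : ℝ} (ha : a ≠ 0)
    (hP : ∀ x, P x = a * x ^ 3 + b * x ^ 2 + c * x) :
    {x | x ≠ 0 ∧ P x = 0}.Finite ∧ {x | x ≠ 0 ∧ P x = 0}.ncard ≤ 2 := by
  set q : ℝ[X] := C a * X ^ 3 + C b * X ^ 2 + C c * X + C 0
  have hq : q ≠ 0 := ne_zero_of_natDegree_gt (n := 0) (by rw [natDegree_cubic ha]; norm_num)
  have hroot : ∀ x, x ∈ q.rootSet ℝ ↔ P x = 0 := fun x => by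
    rw [mem_rootSet, and_iff_right hq]
    simp [q, hP]
  have hsub : {x | x ≠ 0 ∧ P x = 0} ⊆ q.rootSet ℝ \ {0} :=
    fun x ⟨hx, hPx⟩ => ⟨(hroot x).mpr hPx, hx⟩
  have hcard : (q.rootSet ℝ \ {0}).ncard ≤ 2 := by
    rw [Set.ncard_sdiff_singleton_of_mem ((hroot 0).mpr (by simp [hP]))]
    have := ncard_rootSet_le q ℝ
    rw [natDegree_cubic ha] at this
    omega
  have hfin : (q.rootSet ℝ \ {0}).Finite := (q.rootSet_finite ℝ).sdiff
  exact ⟨hfin.subset hsub, (Set.ncard_le_ncard hsub hfin).trans hcard⟩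

lemma conservation_system_iff {α6 α7 γ1 γ2 T1 T2 x y : ℝ} (hx : 0 < α6 * x) (hy : 0 < y) :
    (γ1 * x + α6 * x / y = T1 ∧ -(γ2 * x) - α6 * x / y + y + α7 = T2) ↔
      (0 < T1 - γ1 * x ∧ y = α6 * x / (T1 - γ1 * x) ∧
        α6 * x = (T2 + γ2 * x + (T1 - γ1 * x) - α7) * (T1 - γ1 * x)) := by
  rw [← div_eq_and_eq_iff_of_pos hx hy]
  constructor <;> rintro ⟨h1, h2⟩ <;> constructor <;> linarith

theorem envz_ompr_conservation_at_most_two_positive_solutions_general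
    (α1 α2 α3 α4 α5 α6 α7 : ℝ)
    (h1 : 0 < α1) (h2 : 0 < α2) (h3 : 0 < α3) (h4 : 0 < α4) (h5 : 0 < α5)
    (h6 : 0 < α6)
    (T1 T2 : ℝ) (γ1 γ2 : ℝ)
    (hγ1 : γ1 = 1 + α1 + α2 + α3 + α4 + α5)
    (hγ2 : γ2 = α1 + α2 + α3)
    (P : ℝ → ℝ)
    (hP : ∀ x, P x = (γ1 * α6 * γ2 - γ1 ^ 2 * α6) * x ^ 3 +
      (2 * T1 * γ1 * α6 - T1 * α6 * γ2 + α6 ^ 2 - γ1 * α6 * α7 + γ1 * α6 * T2) *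
        x ^ 2 +
      (T1 * α6 * α7 - T1 ^ 2 * α6 - T1 * α6 * T2) * x) :
    (∀ x y : ℝ, 0 < x → 0 < y →
      ((γ1 * x + α6 * x / y = T1 ∧
          -(γ2 * x) - α6 * x / y + y + α7 = T2) ↔
        (0 < T1 - γ1 * x ∧ y = α6 * x / (T1 - γ1 * x) ∧ P x = 0))) ∧
    ({p : ℝ × ℝ | 0 < p.1 ∧ 0 < p.2 ∧
        γ1 * p.1 + α6 * p.1 / p.2 = T1 ∧
        -(γ2 * p.1) - α6 * p.1 / p.2 + p.2 + α7 = T2}.Finite ∧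
      {p : ℝ × ℝ | 0 < p.1 ∧ 0 < p.2 ∧
        γ1 * p.1 + α6 * p.1 / p.2 = T1 ∧
        -(γ2 * p.1) - α6 * p.1 / p.2 + p.2 + α7 = T2}.ncard ≤ 2) := by
  have hP_factor : ∀ x, P x =
      α6 * x * (α6 * x - (T2 + γ2 * x + (T1 - γ1 * x) - α7) * (T1 - γ1 * x)) := fun x => by
    rw [hP]; ring
  have hiff : ∀ x y : ℝ, 0 < x → 0 < y →
      ((γ1 * x + α6 * x / y = T1 ∧ -(γ2 * x) - α6 * x / y + y + α7 = T2) ↔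
        (0 < T1 - γ1 * x ∧ y = α6 * x / (T1 - γ1 * x) ∧ P x = 0)) := fun x y hx hy => by
    have hk : 0 < α6 * x := by positivity
    rw [conservation_system_iff hk hy, hP_factor, mul_eq_zero, or_iff_right hk.ne', sub_eq_zero]
  have hlead : γ1 * α6 * γ2 - γ1 ^ 2 * α6 ≠ 0 := by
    have hγ1_pos : 0 < γ1 := by rw [hγ1]; positivity
    have hgap : 0 < γ1 - γ2 := by rw [hγ1, hγ2]; linarith
    have : γ1 * α6 * γ2 - γ1 ^ 2 * α6 = -(γ1 * α6 * (γ1 - γ2)) := by ring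
    rw [this, neg_ne_zero]
    exact (mul_pos (mul_pos hγ1_pos h6) hgap).ne'
  obtain ⟨hfin, hcard⟩ := cubic_nonzero_roots_finite_and_ncard_le_two hlead hP
  refine ⟨hiff, Set.finite_and_ncard_le_of_subset_image
    (f := fun x => (x, α6 * x / (T1 - γ1 * x))) hfin hcard ?_⟩
  rintro ⟨x, y⟩ ⟨hx, hy, hcons⟩
  obtain ⟨-, rfl, hPx⟩ := (hiff x y hx hy).mp hcons
  exact ⟨x, ⟨hx.ne', hPx⟩, rfl⟩

/-- Positive solutions of the EnvZ–OmpR conservation equations correspond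
exactly to positive roots of the associated cubic: for positive `x, y`, the
equations `γ₁x + α₆x/y = T₁` and `−γ₂x − α₆x/y + y + α₇ = T₂` hold iff
`T₁ − γ₁x > 0`, `y = α₆x/(T₁ − γ₁x)` and `P(x) = 0`.  Consequently the
conservation system has at most two positive solutions `(x, y)`. -/
theorem envz_ompr_conservation_at_most_two_positive_solutions
    (α1 α2 α3 α4 α5 α6 α7 : ℝ)
    (h1 : 0 < α1) (h2 : 0 < α2) (h3 : 0 < α3) (h4 : 0 < α4) (h5 : 0 < α5)
    (h6 : 0 < α6) (h7 : 0 < α7)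
    (T1 T2 : ℝ) (hT1 : 0 < T1) (γ1 γ2 : ℝ)
    (hγ1 : γ1 = 1 + α1 + α2 + α3 + α4 + α5)
    (hγ2 : γ2 = α1 + α2 + α3)
    (P : ℝ → ℝ)
    (hP : ∀ x, P x = (γ1 * α6 * γ2 - γ1 ^ 2 * α6) * x ^ 3 +
      (2 * T1 * γ1 * α6 - T1 * α6 * γ2 + α6 ^ 2 - γ1 * α6 * α7 + γ1 * α6 * T2) *
        x ^ 2 +
      (T1 * α6 * α7 - T1 ^ 2 * α6 - T1 * α6 * T2) * x) :
    (∀ x y : ℝ, 0 < x → 0 < y →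
      ((γ1 * x + α6 * x / y = T1 ∧
          -(γ2 * x) - α6 * x / y + y + α7 = T2) ↔
        (0 < T1 - γ1 * x ∧ y = α6 * x / (T1 - γ1 * x) ∧ P x = 0))) ∧
    ({p : ℝ × ℝ | 0 < p.1 ∧ 0 < p.2 ∧
        γ1 * p.1 + α6 * p.1 / p.2 = T1 ∧
        -(γ2 * p.1) - α6 * p.1 / p.2 + p.2 + α7 = T2}.Finite ∧
      {p : ℝ × ℝ | 0 < p.1 ∧ 0 < p.2 ∧
        γ1 * p.1 + α6 * p.1 / p.2 = T1 ∧
        -(γ2 * p.1) - α6 * p.1 / p.2 + p.2 + α7 = T2}.ncard ≤ 2) :=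
  envz_ompr_conservation_at_most_two_positive_solutions_general α1 α2 α3 α4 α5 α6 α7 h1 h2 h3 h4 h5
    h6 T1 T2 γ1 γ2 hγ1 hγ2 P hP
end
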